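/- arXiv:2402.03930 — 4 statements merged into one kernel-verified Lean document; each statement's English description precedes it below -/
import Mathlib

section
/- Let $(T_k)_{k\geq 2}$ be i.i.d. Exp(1) random variables and $(\mathbf{C}_j)_{j\geq 1}$ be i.i.d. Exp($\gamma$) random variables independent of the $T_k$, with $\gamma > 0$. For $n \geq 1$ and $1 \leq m \leq n$, the probability that $\mathbf{C}_j > \sum_{k=j+1}^n T_k$ holds simultaneously for all $j \in \{n-m+1, \ldots, n\}$ equals $\left[\prod_{k=1}^{m-1}(1+k\gamma)\right]^{-1}$. -/
/-!
Index the vertices `j = n - m + 1 + i`, `i < m`, and write `S_i` for the sum of the passage times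
strictly to the right of vertex `i`. By independence the law of (passage times, clocks) is a
product measure, so by Fubini one may first integrate out the clocks: given the passage times
`t`, the event has probability `∏ᵢ exp (-γ S_i) = ∏ₗ exp (-γ l t_l)`, because the passage time
`t_l` enters exactly the `l` sums `S_0, …, S_{l-1}`. Integrating against the independent `Exp(1)`
passage times then gives `∏ₗ 1 / (1 + l γ)`, the Laplace transform of `Exp(1)` at `l γ`.
-/

open MeasureTheory ProbabilityTheory Real Finset

lemma sum_sum_mem_eq_sum_card_mul {ι κ R : Type*} [Fintype ι] [Fintype κ] [DecidableEq κ]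
    [NonAssocSemiring R] (S : ι → Finset κ) (t : κ → R) :
    ∑ i, ∑ k ∈ S i, t k = ∑ k, #{i | k ∈ S i} * t k := by
  rw [sum_comm' (t' := univ) (s' := fun k => {i | k ∈ S i}) (by simp)]
  simp [sum_const, nsmul_eq_mul]

lemma card_filter_mem_Ioi {m : ℕ} (k : Fin m) : #{i | k ∈ Ioi i} = k := by
  simp only [mem_Ioi]
  rw [filter_gt_eq_Iio, Fin.card_Iio]

lemma prod_Icc_one_pred_eq_prod_range {M : Type*} [CommMonoid M] {g : ℕ → M} (hg : g 0 = 1)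
    (m : ℕ) : ∏ k ∈ Icc 1 (m - 1), g k = ∏ k ∈ range m, g k := by
  refine prod_subset (fun k hk => ?_) fun k hk hk' => ?_
  · simp only [mem_Icc, mem_range] at hk ⊢
    omega
  · obtain rfl : k = 0 := by
      simp only [mem_Icc, mem_range] at hk hk'
      omega
    exact hg

lemma image_Ioi_eq_Icc {m n : ℕ} (hmn : m ≤ n) (i : Fin m) :
    (Ioi i).image (fun l : Fin m => n - m + 1 + l) = Icc (n - m + 1 + i + 1) n := by
  ext k
  simp only [mem_image, mem_Ioi, mem_Icc, Fin.lt_def]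
  constructor
  · rintro ⟨l, hil, rfl⟩
    omega
  · intro hk
    exact ⟨⟨k - (n - m + 1), by omega⟩, by simp only; omega, by simp only; omega⟩

lemma forall_mem_Icc_iff_forall_fin {m n : ℕ} (hmn : m ≤ n) {p : ℕ → Prop} :
    (∀ j ∈ Icc (n - m + 1) n, p j) ↔ ∀ i : Fin m, p (n - m + 1 + i) := by
  refine ⟨fun h i => h _ (mem_Icc.2 (by omega)), fun h j hj => ?_⟩
  obtain ⟨hj1, hj2⟩ := mem_Icc.1 hj
  simpa [show n - m + 1 + (j - (n - m + 1)) = j by omega] using h ⟨j - (n - m + 1), by omega⟩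

lemma prod_ofReal_exp {ι : Type*} (s : Finset ι) (f : ι → ℝ) :
    ∏ i ∈ s, ENNReal.ofReal (exp (f i)) = ENNReal.ofReal (exp (∑ i ∈ s, f i)) := by
  rw [exp_sum, ENNReal.ofReal_prod_of_nonneg fun i _ => (exp_pos _).le]

lemma MeasureTheory.lintegral_pi_prod_eq_prod {ι : Type*} [Fintype ι] {α : ι → Type*}
    [∀ i, MeasurableSpace (α i)] {μ : ∀ i, Measure (α i)} [∀ i, IsProbabilityMeasure (μ i)]
    (g : ∀ i, α i → ENNReal) (hg : ∀ i, Measurable (g i)) :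
    ∫⁻ x, ∏ i, g i (x i) ∂Measure.pi μ = ∏ i, ∫⁻ y, g i y ∂μ i := by
  rw [lintegral_prod_eq_prod_lintegral_of_indepFun _ _
    (iIndepFun_pi fun i => (hg i).aemeasurable) fun i => (hg i).comp (measurable_pi_apply i)]
  exact prod_congr rfl fun i _ => (measurePreserving_eval μ i).lintegral_comp (hg i)

namespace ProbabilityTheory

lemma HasLaw.of_map_eq {Ω 𝓧 : Type*} [MeasurableSpace Ω] [MeasurableSpace 𝓧] {P : Measure Ω}
    {μ : Measure 𝓧} [NeZero μ] {X : Ω → 𝓧} (h : P.map X = μ) : HasLaw X μ P :=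
  ⟨.of_map_ne_zero (h ▸ NeZero.ne μ), h⟩

lemma iIndepFun.sum_elim_comp {Ω ι κ ι' κ' β : Type*} [MeasurableSpace Ω] [MeasurableSpace β]
    {P : Measure Ω} {X : ι → Ω → β} {Y : κ → Ω → β} (h : iIndepFun (Sum.elim X Y) P)
    {f : ι' → ι} {g : κ' → κ} (hf : f.Injective) (hg : g.Injective) :
    iIndepFun (Sum.elim (fun i => X (f i)) (fun j => Y (g j))) P := by
  convert h.precomp (Sum.map_injective.2 ⟨hf, hg⟩) using 1
  ext (_ | _) <;> rfl

section Exponential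

variable {r : ℝ}

lemma expMeasure_Ioi (hr : 0 < r) {x : ℝ} (hx : 0 ≤ x) :
    expMeasure r (Set.Ioi x) = ENNReal.ofReal (exp (-(r * x))) := by
  have := isProbabilityMeasure_expMeasure hr
  rw [← Set.compl_Iic, prob_compl_eq_one_sub measurableSet_Iic, ← ofReal_cdf,
    cdf_expMeasure_eq hr, if_pos hx, ← ENNReal.ofReal_one,
    ← ENNReal.ofReal_sub _ (by simp; positivity), sub_sub_cancel]

lemma ae_nonneg_expMeasure (r : ℝ) : ∀ᵐ x ∂expMeasure r, 0 ≤ x := by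
  rw [ae_iff]
  simp only [not_le]
  exact (withDensity_apply _ measurableSet_Iio).trans (lintegral_exponentialPDF_of_nonpos le_rfl)

lemma measurable_exponentialPDF (r : ℝ) : Measurable (exponentialPDF r) :=
  (measurable_exponentialPDFReal r).ennreal_ofReal

lemma lintegral_exp_neg_mul_expMeasure (hr : 0 < r) {a : ℝ} (hra : 0 < r + a) :
    ∫⁻ x, ENNReal.ofReal (exp (-(a * x))) ∂expMeasure r = ENNReal.ofReal (r / (r + a)) := by
  have hdensity (x : ℝ) : exponentialPDF r x * ENNReal.ofReal (exp (-(a * x)))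
      = ENNReal.ofReal (r / (r + a)) * exponentialPDF (r + a) x := by
    rcases lt_or_ge x 0 with hx | hx
    · simp [exponentialPDF_of_neg hx]
    · rw [exponentialPDF_of_nonneg hx, exponentialPDF_of_nonneg hx,
        ← ENNReal.ofReal_mul (by positivity), ← ENNReal.ofReal_mul (by positivity),
        mul_assoc, ← exp_add, ← mul_assoc, div_mul_cancel₀ _ hra.ne']
      ring_nf
  change ∫⁻ x, _ ∂volume.withDensity (exponentialPDF r) = _
  rw [lintegral_withDensity_eq_lintegral_mul₀ (measurable_exponentialPDF r).aemeasurable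
    (by fun_prop)]
  simp only [Pi.mul_apply, hdensity]
  rw [lintegral_const_mul _ (measurable_exponentialPDF _), lintegral_exponentialPDF_eq_one hra,
    mul_one]

end Exponential

lemma measurableSet_forall_sum_lt {ι κ : Type*} [Countable ι] (S : ι → Finset κ) :
    MeasurableSet {p : (κ → ℝ) × (ι → ℝ) | ∀ i, ∑ k ∈ S i, p.1 k < p.2 i} := by
  simp only [Set.ofPred_forall]
  exact .iInter fun i => measurableSet_lt (by fun_prop) (by fun_prop)

section ClocksBeatSums

variable {ι κ : Type*} [Fintype ι] [Fintype κ] [DecidableEq κ] {r γ : ℝ}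

lemma pi_prod_pi_expMeasure_forall_sum_lt (hr : 0 < r) (hγ : 0 < γ) (S : ι → Finset κ) :
    ((Measure.pi fun _ : κ => expMeasure r).prod (Measure.pi fun _ : ι => expMeasure γ))
        {p | ∀ i, ∑ k ∈ S i, p.1 k < p.2 i}
      = ∏ k, ENNReal.ofReal (r / (r + γ * #{i | k ∈ S i})) := by
  have := isProbabilityMeasure_expMeasure hr
  have := isProbabilityMeasure_expMeasure hγ
  set B : Set ((κ → ℝ) × (ι → ℝ)) := {p | ∀ i, ∑ k ∈ S i, p.1 k < p.2 i}
  have hsection (t : κ → ℝ) :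
      Prod.mk t ⁻¹' B = Set.univ.pi fun i => Set.Ioi (∑ k ∈ S i, t k) := by
    ext c
    simp [B, Set.mem_pi]
  have hnonneg : ∀ᵐ t ∂(Measure.pi fun _ : κ => expMeasure r), ∀ k, 0 ≤ t k :=
    ae_all_iff.2 fun k => (Measure.quasiMeasurePreserving_eval _ k).ae (ae_nonneg_expMeasure r)
  rw [Measure.prod_apply (measurableSet_forall_sum_lt S)]
  calc ∫⁻ t, (Measure.pi fun _ : ι => expMeasure γ) (Prod.mk t ⁻¹' B)
          ∂(Measure.pi fun _ : κ => expMeasure r)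
      = ∫⁻ t, ∏ k, ENNReal.ofReal (exp (-((γ * #{i | k ∈ S i}) * t k)))
          ∂(Measure.pi fun _ : κ => expMeasure r) := by
        refine lintegral_congr_ae (hnonneg.mono fun t ht => ?_)
        dsimp only
        rw [hsection, Measure.pi_pi,
          prod_congr rfl fun i _ => expMeasure_Ioi hγ (sum_nonneg fun k _ => ht k),
          prod_ofReal_exp, prod_ofReal_exp]
        simp_rw [sum_neg_distrib, ← mul_sum, sum_sum_mem_eq_sum_card_mul, mul_sum, mul_assoc]
    _ = ∏ k, ENNReal.ofReal (r / (r + γ * #{i | k ∈ S i})) := by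
        rw [lintegral_pi_prod_eq_prod
          (fun k y => ENNReal.ofReal (exp (-((γ * #{i | k ∈ S i}) * y)))) fun k => by fun_prop]
        exact prod_congr rfl fun k _ => lintegral_exp_neg_mul_expMeasure hr (by positivity)

lemma measure_forall_sum_lt_of_iIndepFun {Ω : Type*} [MeasurableSpace Ω] {P : Measure Ω}
    (hr : 0 < r) (hγ : 0 < γ) {X : κ → Ω → ℝ} {Y : ι → Ω → ℝ}
    (hXY : iIndepFun (Sum.elim X Y) P) (hX : ∀ k, HasLaw (X k) (expMeasure r) P)
    (hY : ∀ i, HasLaw (Y i) (expMeasure γ) P) (S : ι → Finset κ) :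
    P {ω | ∀ i, ∑ k ∈ S i, X k ω < Y i ω}
      = ∏ k, ENNReal.ofReal (r / (r + γ * #{i | k ∈ S i})) := by
  have := isProbabilityMeasure_expMeasure hr
  have := isProbabilityMeasure_expMeasure hγ
  have : ∀ j, SigmaFinite (Sum.elim (fun _ : κ => expMeasure r) (fun _ : ι => expMeasure γ) j) :=
    fun | .inl _ => by dsimp only [Sum.elim_inl]; infer_instance
        | .inr _ => by dsimp only [Sum.elim_inr]; infer_instance
  have hjoint : HasLaw (fun ω j => Sum.elim X Y j ω)
      (Measure.pi (Sum.elim (fun _ => expMeasure r) (fun _ => expMeasure γ))) P :=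
    hXY.hasLaw_pi fun | .inl k => hX k | .inr i => hY i
  have hpair : HasLaw (fun ω => ((fun k => X k ω), (fun i => Y i ω)))
      ((Measure.pi fun _ : κ => expMeasure r).prod (Measure.pi fun _ : ι => expMeasure γ)) P :=
    (MeasurePreserving.symm _ (measurePreserving_sumPiEquivProdPi_symm _)).comp_hasLaw hjoint
  rw [← pi_prod_pi_expMeasure_forall_sum_lt hr hγ S,
    ← hpair.measure_eq (measurableSet_forall_sum_lt S)]

end ClocksBeatSums

end ProbabilityTheory

theorem tail_red_cluster_distribution_general
    {Ω : Type*} [MeasureSpace Ω]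
    (γ : ℝ) (hγ : 0 < γ)
    (T : ℕ → Ω → ℝ) (C : ℕ → Ω → ℝ)
    (hindep : iIndepFun
      (Sum.elim T C : ℕ ⊕ ℕ → Ω → ℝ) ℙ)
    (hTdist : ∀ k, Measure.map (T k) ℙ = expMeasure 1)
    (hCdist : ∀ j, Measure.map (C j) ℙ = expMeasure γ)
    (n m : ℕ) (hmn : m ≤ n) :
    ℙ {ω | ∀ j ∈ Finset.Icc (n - m + 1) n,
        (∑ k ∈ Finset.Icc (j + 1) n, T k ω) < C j ω}
      = ENNReal.ofReal ((∏ k ∈ Finset.Icc 1 (m - 1), (1 + k * γ))⁻¹) := by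
  have := isProbabilityMeasure_expMeasure one_pos
  have := isProbabilityMeasure_expMeasure hγ
  have hf : Function.Injective fun i : Fin m => n - m + 1 + (i : ℕ) :=
    fun i j h => Fin.ext (by simpa using h)
  have hevent : {ω | ∀ j ∈ Icc (n - m + 1) n, ∑ k ∈ Icc (j + 1) n, T k ω < C j ω}
      = {ω | ∀ i : Fin m, ∑ l ∈ Ioi i, T (n - m + 1 + l) ω < C (n - m + 1 + i) ω} := by
    ext ω
    simp only [Set.mem_ofPred_eq, forall_mem_Icc_iff_forall_fin hmn, ← image_Ioi_eq_Icc hmn,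
      sum_image fun _ _ _ _ h => hf h]
  rw [hevent, measure_forall_sum_lt_of_iIndepFun one_pos hγ (hindep.sum_elim_comp hf hf)
    (fun _ => .of_map_eq (hTdist _)) (fun _ => .of_map_eq (hCdist _)) (fun i => Ioi i)]
  simp_rw [card_filter_mem_Ioi]
  rw [prod_Icc_one_pred_eq_prod_range (by simp) m, ← Fin.prod_univ_eq_prod_range,
    ← prod_inv_distrib, ENNReal.ofReal_prod_of_nonneg fun _ _ => by positivity]
  congr! 2 with k
  rw [one_div, mul_comm]

/-- Distribution of the tail red cluster in FPP with recovery on the semi-line: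
`ℙ(Ĥ_n ≥ m) = ∏_{k=1}^{m-1} (1+kγ)⁻¹`, where the event `{Ĥ_n ≥ m}` means that
`C_j > ∑_{k=j+1}^n T_k` for all `j ∈ {n-m+1, …, n}`. The passage times `T` are
i.i.d. Exp(1), the recovery clocks `C` are i.i.d. Exp(γ), all independent. -/
theorem tail_red_cluster_distribution
    {Ω : Type*} [MeasureSpace Ω] [IsProbabilityMeasure (ℙ : Measure Ω)]
    (γ : ℝ) (hγ : 0 < γ)
    (T : ℕ → Ω → ℝ) (C : ℕ → Ω → ℝ)
    (hTmeas : ∀ k, Measurable (T k)) (hCmeas : ∀ j, Measurable (C j))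
    (hindep : iIndepFun
      (Sum.elim T C : ℕ ⊕ ℕ → Ω → ℝ) ℙ)
    (hTdist : ∀ k, Measure.map (T k) ℙ = expMeasure 1)
    (hCdist : ∀ j, Measure.map (C j) ℙ = expMeasure γ)
    (n m : ℕ) (hm : 1 ≤ m) (hmn : m ≤ n) :
    ℙ {ω | ∀ j ∈ Finset.Icc (n - m + 1) n,
        (∑ k ∈ Finset.Icc (j + 1) n, T k ω) < C j ω}
      = ENNReal.ofReal ((∏ k ∈ Finset.Icc 1 (m - 1), (1 + k * γ))⁻¹) :=
  tail_red_cluster_distribution_general γ hγ T C hindep hTdist hCdist n m hmn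
end

section
/- Let $\gamma>0$ and let $(\widehat{H}_n)_{n\geq 1}$ be a sequence of $\mathbb{N}$-valued random variables with $\P(\widehat{H}_n \geq m) = \prod_{k=1}^{m-1}(1+k\gamma)^{-1}$ for all $0 \leq m \leq n$ (and $\widehat{H}_n \leq n$), such that for any $r \in (0,1)$, $s \in (1, 1/r)$, and $n$ large enough, the events $\{\widehat{H}_{\lfloor n^s \rfloor} \geq \lceil r \log \lfloor n^s\rfloor / \log\log \lfloor n^s\rfloor \rceil\}$ are independent across $n$. Then almost surely $\limsup_{n\to\infty} \widehat{H}_n \log\log n / \log n = 1$. -/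
/-!
Writing `Π(M) = ∏_{k=1}^{M} (1 + kγ)`, so that `ℙ(Ĥ_n ≥ m) = Π(m - 1)⁻¹`, one has
`M! γ^M ≤ Π(M) ≤ M! (1 + γ)^M`, hence `log Π(M) ~ M log M`. At the level
`m_n = ⌈a log n / log log n⌉` this gives `log Π(m_n - 1) ~ a log n`, i.e.
`ℙ(Ĥ_n ≥ m_n) = n^{-a + o(1)}`. For `a > 1` these probabilities are summable and the first
Borel–Cantelli lemma bounds the limsup by `a`. For `a = r < 1` and `1 < s < 1/r`, the events
`{Ĥ_{⌊k^s⌋} ≥ m_{⌊k^s⌋}}` have probabilities at least `k^{-q}` with `q < 1` and are independent,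
so the second Borel–Cantelli lemma shows that the limsup is at least `r`.
-/

open MeasureTheory ProbabilityTheory Filter Real Asymptotics Finset
open scoped Nat ENNReal Topology

namespace TailRedCluster

noncomputable def clusterProd (γ : ℝ) (M : ℕ) : ℝ := ∏ k ∈ Icc 1 M, (1 + (k : ℝ) * γ)

noncomputable def threshold (a : ℝ) (n : ℕ) : ℕ := ⌈a * log n / log (log n)⌉₊

section clusterProd

variable {γ : ℝ}

lemma clusterProd_pos (hγ : 0 ≤ γ) (M : ℕ) : 0 < clusterProd γ M :=
  prod_pos fun k _ => by positivity

lemma prod_Icc_natCast_mul (c : ℝ) (M : ℕ) : ∏ k ∈ Icc 1 M, ((k : ℝ) * c) = M ! * c ^ M := by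
  rw [prod_mul_distrib, prod_const, Nat.card_Icc, Nat.add_sub_cancel, ← Nat.cast_prod,
    ← Finset.Ico_add_one_right_eq_Icc, prod_Ico_id_eq_factorial]

lemma factorial_mul_pow_le_clusterProd (hγ : 0 ≤ γ) (M : ℕ) :
    (M ! : ℝ) * γ ^ M ≤ clusterProd γ M := by
  rw [← prod_Icc_natCast_mul]
  exact prod_le_prod (fun k _ => by positivity) fun k _ => le_add_of_nonneg_left zero_le_one

lemma clusterProd_le_factorial_mul_pow (hγ : 0 ≤ γ) (M : ℕ) :
    clusterProd γ M ≤ M ! * (1 + γ) ^ M := by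
  rw [← prod_Icc_natCast_mul]
  refine prod_le_prod (fun k _ => by positivity) fun k hk => ?_
  have hk : (1 : ℝ) ≤ k := by exact_mod_cast (mem_Icc.1 hk).1
  nlinarith

lemma mul_log_add_log_sub_one_le_log_clusterProd (hγ : 0 < γ) {M : ℕ} (hM : M ≠ 0) :
    M * (log M + log γ - 1) ≤ log (clusterProd γ M) := by
  have hfact : ((M : ℝ) / exp 1) ^ M ≤ M ! := by
    rw [div_pow, exp_one_pow, div_le_iff₀ (exp_pos _), mul_comm, ← div_le_iff₀ (by positivity)]
    exact pow_div_factorial_le_exp M M.cast_nonneg M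
  calc (M : ℝ) * (log M + log γ - 1) = log (((M : ℝ) / exp 1) ^ M * γ ^ M) := by
        rw [log_mul (by positivity) (by positivity), log_pow, log_pow,
          log_div (by positivity) (by positivity), log_exp]
        ring
    _ ≤ log (M ! * γ ^ M) := log_le_log (by positivity) (by gcongr)
    _ ≤ log (clusterProd γ M) :=
        log_le_log (by positivity) (factorial_mul_pow_le_clusterProd hγ.le M)

lemma log_clusterProd_le_mul_log_add_log (hγ : 0 ≤ γ) {M : ℕ} (hM : M ≠ 0) :
    log (clusterProd γ M) ≤ M * (log M + log (1 + γ)) := by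
  calc log (clusterProd γ M) ≤ log (M ! * (1 + γ) ^ M) :=
        log_le_log (clusterProd_pos hγ M) (clusterProd_le_factorial_mul_pow hγ M)
    _ ≤ log ((M : ℝ) ^ M * (1 + γ) ^ M) :=
        log_le_log (by positivity) (by gcongr; exact_mod_cast Nat.factorial_le_pow M)
    _ = M * (log M + log (1 + γ)) := by
        rw [log_mul (by positivity) (by positivity), log_pow, log_pow]
        ring

lemma isEquivalent_log_clusterProd (hγ : 0 < γ) :
    (fun M : ℕ => log (clusterProd γ M)) ~[atTop] fun M => M * log M := by
  have hO : (fun M : ℕ => log (clusterProd γ M) - M * log M) =O[atTop] fun M => (M : ℝ) := by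
    refine IsBigO.of_bound (|log γ - 1| + |log (1 + γ)|) ?_
    filter_upwards [eventually_ne_atTop 0] with M hM
    have lower := mul_log_add_log_sub_one_le_log_clusterProd hγ hM
    have upper := log_clusterProd_le_mul_log_add_log hγ.le hM
    have hM0 : (0 : ℝ) ≤ M := M.cast_nonneg
    rw [Real.norm_eq_abs, Real.norm_eq_abs, abs_of_nonneg hM0, abs_le]
    constructor <;> nlinarith [neg_abs_le (log γ - 1), le_abs_self (log (1 + γ)),
      abs_nonneg (log γ - 1), abs_nonneg (log (1 + γ))]
  have ho : (fun M : ℕ => (M : ℝ)) =o[atTop] fun M => M * log M := by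
    simpa using (isBigO_refl (fun M : ℕ => (M : ℝ)) atTop).mul_isLittleO
      ((isLittleO_one_left_iff ℝ).2
        (tendsto_norm_atTop_atTop.comp (tendsto_log_atTop.comp tendsto_natCast_atTop_atTop)))
  exact (hO.trans_isLittleO ho).isEquivalent

end clusterProd

lemma tendsto_div_log_atTop : Tendsto (fun t => t / log t) atTop atTop := by
  have hpos : ∀ᶠ t in atTop, log t / id t ∈ Set.Ioi 0 := by
    filter_upwards [eventually_gt_atTop 1] with t ht
    exact div_pos (log_pos ht) (by simp only [id]; linarith)
  exact (tendsto_nhdsWithin_iff.2 ⟨isLittleO_log_id_atTop.tendsto_div_nhds_zero, hpos⟩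
    ).inv_tendsto_nhdsGT_zero.congr fun t => inv_div (log t) t

lemma isEquivalent_log_mul_div_log {a : ℝ} (ha : 0 < a) :
    (fun t => log (a * t / log t)) ~[atTop] log := by
  have hloglog : (fun t => log (log t)) =o[atTop] log :=
    isLittleO_log_id_atTop.comp_tendsto tendsto_log_atTop
  refine IsLittleO.isEquivalent
    (((isLittleO_const_log_atTop (c := log a)).sub hloglog).congr' ?_ EventuallyEq.rfl)
  filter_upwards [eventually_gt_atTop 1] with t ht
  have ht0 : 0 < t := by linarith
  rw [Pi.sub_apply, log_div (by positivity) (log_pos ht).ne', log_mul ha.ne' ht0.ne']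
  ring

lemma tendsto_log_clusterProd_ceil_div_log {γ a : ℝ} (hγ : 0 < γ) (ha : 0 < a) :
    Tendsto (fun t => log (clusterProd γ (⌈a * t / log t⌉₊ - 1)) / t) atTop (𝓝 a) := by
  set x : ℝ → ℝ := fun t => a * t / log t
  set M : ℝ → ℕ := fun t => ⌈x t⌉₊ - 1
  have hx : Tendsto x atTop atTop := by
    simpa [x, mul_div_assoc] using tendsto_div_log_atTop.const_mul_atTop ha
  have hMx : (fun t => (M t : ℝ)) ~[atTop] x := by
    have hcast : (fun t => (⌈x t⌉₊ : ℝ) - 1) =ᶠ[atTop] fun t => (M t : ℝ) := by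
      filter_upwards [hx.eventually_gt_atTop 0] with t ht
      rw [Nat.cast_pred (Nat.ceil_pos.2 ht)]
    have hone : (fun _ => (1 : ℝ)) =o[atTop] x :=
      (isLittleO_one_left_iff ℝ).2 (tendsto_norm_atTop_atTop.comp hx)
    exact ((isEquivalent_nat_ceil.comp_tendsto hx).sub_isLittleO hone).congr_left hcast
  have hM : Tendsto M atTop atTop := tendsto_natCast_atTop_iff.1 (hMx.symm.tendsto_atTop hx)
  have hMlogM : (fun t => (M t : ℝ) * log (M t)) ~[atTop] fun t => a * t := by
    refine (hMx.mul ((hMx.log hx).trans (isEquivalent_log_mul_div_log ha))).congr_right ?_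
    filter_upwards [eventually_gt_atTop 1] with t ht
    simp only [Pi.mul_apply, x]
    field_simp [(log_pos ht).ne']
  have hlog := ((isEquivalent_log_clusterProd hγ).comp_tendsto hM).trans hMlogM
  refine (hlog.div (IsEquivalent.refl (u := fun t : ℝ => t))).symm.tendsto_nhds
    (tendsto_const_nhds.congr' ?_)
  filter_upwards [eventually_gt_atTop 0] with t ht
  simp only [Pi.div_apply]
  field_simp

lemma tendsto_log_clusterProd_threshold {γ a : ℝ} (hγ : 0 < γ) (ha : 0 < a) :
    Tendsto (fun n : ℕ => log (clusterProd γ (threshold a n - 1)) / log n) atTop (𝓝 a) :=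
  (tendsto_log_clusterProd_ceil_div_log hγ ha).comp
    (tendsto_log_atTop.comp tendsto_natCast_atTop_atTop)

lemma threshold_le_iff {a : ℝ} {n h : ℕ} (hn : 1 < log n) :
    threshold a n ≤ h ↔ a ≤ h * log (log n) / log n := by
  rw [threshold, Nat.ceil_le, div_le_iff₀ (log_pos hn), le_div_iff₀ (by linarith)]

lemma eventually_threshold_le_self (a : ℝ) : ∀ᶠ n : ℕ in atTop, threshold a n ≤ n := by
  have hL : Tendsto (fun n : ℕ => log n) atTop atTop :=
    tendsto_log_atTop.comp tendsto_natCast_atTop_atTop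
  have hLL : Tendsto (fun n : ℕ => log (log n)) atTop atTop := tendsto_log_atTop.comp hL
  filter_upwards [hLL.eventually_ge_atTop a, hLL.eventually_gt_atTop 0,
    hL.eventually_gt_atTop 0] with n haLL hLL0 hL0
  rw [threshold, Nat.ceil_le]
  calc a * log n / log (log n) ≤ log n := by
        rw [div_le_iff₀ hLL0, mul_comm]
        exact mul_le_mul_of_nonneg_left haLL hL0.le
    _ ≤ n := log_le_self n.cast_nonneg

lemma inv_le_rpow_neg_of_mul_log_le {x y b : ℝ} (hx : 0 < x) (hy : 0 < y)
    (h : b * log x ≤ log y) : y⁻¹ ≤ x ^ (-b) := by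
  rw [rpow_neg hx.le]
  refine inv_anti₀ (rpow_pos_of_pos hx b) ?_
  rwa [← log_le_log_iff (rpow_pos_of_pos hx b) hy, log_rpow hx]

lemma rpow_neg_le_inv_of_log_le_mul {x y b : ℝ} (hx : 0 < x) (hy : 0 < y)
    (h : log y ≤ b * log x) : x ^ (-b) ≤ y⁻¹ := by
  rw [rpow_neg hx.le]
  refine inv_anti₀ hy ?_
  rwa [← log_le_log_iff hy (rpow_pos_of_pos hx b), log_rpow hx]

lemma tsum_ofReal_eq_top_of_not_summable {ι : Type*} {g : ι → ℝ} (hg0 : ∀ i, 0 ≤ g i)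
    (hg : ¬ Summable g) : ∑' i, ENNReal.ofReal (g i) = ∞ := by
  by_contra h
  exact hg ((ENNReal.summable_toReal h).congr fun i => ENNReal.toReal_ofReal (hg0 i))

section BorelCantelli

variable {Ω : Type*} [MeasurableSpace Ω] {μ : Measure Ω}

lemma ae_eventually_notMem_of_eventually_le_ofReal {s : ℕ → Set Ω} {g : ℕ → ℝ}
    (hg : Summable g) (h : ∀ᶠ n in atTop, μ (s n) ≤ ENNReal.ofReal (g n)) :
    ∀ᵐ ω ∂μ, ∀ᶠ n in atTop, ω ∉ s n := by
  obtain ⟨N, hN⟩ := eventually_atTop.1 h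
  have hsum : ∑' i, μ (s (i + N)) ≠ ∞ :=
    ne_top_of_le_ne_top ((summable_nat_add_iff N).2 hg).tsum_ofReal_ne_top
      (ENNReal.tsum_le_tsum fun i => hN _ (Nat.le_add_left N i))
  filter_upwards [ae_eventually_notMem hsum] with ω hω
  rwa [← map_add_atTop_eq_nat N, eventually_map]

lemma ae_frequently_mem_of_iIndepSet [IsProbabilityMeasure μ] {s : ℕ → Set Ω} {N : ℕ}
    (hs : ∀ n, MeasurableSet (s n)) (hind : iIndepSet (fun n : {k // N ≤ k} => s n) μ)
    {g : ℕ → ℝ} (hg0 : ∀ n, 0 ≤ g n) (hg : ¬ Summable g)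
    (h : ∀ᶠ n in atTop, ENNReal.ofReal (g n) ≤ μ (s n)) :
    ∀ᵐ ω ∂μ, ∃ᶠ n in atTop, ω ∈ s n := by
  obtain ⟨K, hK⟩ := eventually_atTop.1 h
  let e : ℕ → {k // N ≤ k} := fun i => ⟨i + (N + K), by omega⟩
  have he : Function.Injective e := fun i j hij => by simpa [e] using congrArg Subtype.val hij
  have hdiv : ∑' i, μ (s (i + (N + K))) = ∞ := by
    refine top_unique ((tsum_ofReal_eq_top_of_not_summable (fun i => hg0 _)
      (mt (summable_nat_add_iff (N + K)).1 hg)).symm.le.trans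
      (ENNReal.tsum_le_tsum fun i => hK _ (by omega)))
  have hind' : iIndepSet (fun i => s (i + (N + K))) μ := hind.precomp (g := e) he
  have hlimsup := measure_limsup_eq_one (fun i => hs _) hind' hdiv
  have hae : ∀ᵐ ω ∂μ, ω ∈ limsup (fun i => s (i + (N + K))) atTop := by
    exact ae_iff.2 ((prob_compl_eq_zero_iff
      (MeasurableSet.measurableSet_limsup fun i => hs _)).2 hlimsup)
  filter_upwards [hae] with ω hω
  rw [← map_add_atTop_eq_nat (N + K), frequently_map]
  exact mem_limsup_iff_frequently_mem.1 hω

end BorelCantelli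

section Steps

variable {Ω : Type*} [MeasurableSpace Ω] {μ : Measure Ω} {γ : ℝ} {H : ℕ → Ω → ℕ}

theorem ae_eventually_le_of_one_lt (hγ : 0 < γ)
    (hdist : ∀ n, 1 ≤ n → ∀ m ≤ n,
      μ {ω | m ≤ H n ω} = ENNReal.ofReal (clusterProd γ (m - 1))⁻¹)
    {a : ℝ} (ha : 1 < a) :
    ∀ᵐ ω ∂μ, ∀ᶠ n in atTop, (H n ω : ℝ) * log (log n) / log n ≤ a := by
  obtain ⟨b, hb1, hba⟩ := exists_between ha
  have hL : Tendsto (fun n : ℕ => log n) atTop atTop :=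
    tendsto_log_atTop.comp tendsto_natCast_atTop_atTop
  have hbound : ∀ᶠ n : ℕ in atTop,
      μ {ω | threshold a n ≤ H n ω} ≤ ENNReal.ofReal ((n : ℝ) ^ (-b)) := by
    filter_upwards [(tendsto_log_clusterProd_threshold hγ (by linarith)).eventually_const_le hba,
      eventually_threshold_le_self a, hL.eventually_gt_atTop 0, eventually_ge_atTop 1]
      with n hlog hthr hL0 hn1
    rw [hdist n hn1 _ hthr]
    exact ENNReal.ofReal_le_ofReal (inv_le_rpow_neg_of_mul_log_le (by positivity)
      (clusterProd_pos hγ.le _) ((le_div_iff₀ hL0).1 hlog))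
  filter_upwards [ae_eventually_notMem_of_eventually_le_ofReal
    (summable_nat_rpow.2 (by linarith)) hbound] with ω hω
  filter_upwards [hω, hL.eventually_gt_atTop 1] with n hn hL1
  exact (not_le.1 (mt (threshold_le_iff hL1).2 hn)).le

theorem ae_frequently_ge_of_iIndepSet [IsProbabilityMeasure μ] (hγ : 0 < γ)
    (hmeas : ∀ n, Measurable (H n))
    (hdist : ∀ n, 1 ≤ n → ∀ m ≤ n,
      μ {ω | m ≤ H n ω} = ENNReal.ofReal (clusterProd γ (m - 1))⁻¹)
    {r s : ℝ} (hr : 0 < r) (hs : 0 < s) (hrs : r * s < 1) {N : ℕ}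
    (hind : iIndepSet (fun k : {k : ℕ // N ≤ k} =>
      {ω | threshold r ⌊((k : ℕ) : ℝ) ^ s⌋₊ ≤ H ⌊((k : ℕ) : ℝ) ^ s⌋₊ ω}) μ) :
    ∀ᵐ ω ∂μ, ∃ᶠ n in atTop, r ≤ (H n ω : ℝ) * log (log n) / log n := by
  set n : ℕ → ℕ := fun k => ⌊(k : ℝ) ^ s⌋₊
  obtain ⟨r', hrr', hr's⟩ : ∃ r', r < r' ∧ r' * s < 1 := by
    obtain ⟨r', h1, h2⟩ := exists_between ((lt_div_iff₀ hs).2 (by simpa using hrs))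
    exact ⟨r', h1, by simpa using (lt_div_iff₀ hs).1 h2⟩
  have hn : Tendsto n atTop atTop :=
    tendsto_nat_floor_atTop.comp ((tendsto_rpow_atTop hs).comp tendsto_natCast_atTop_atTop)
  have hL : Tendsto (fun n : ℕ => log n) atTop atTop :=
    tendsto_log_atTop.comp tendsto_natCast_atTop_atTop
  have hbound : ∀ᶠ k : ℕ in atTop, ENNReal.ofReal ((k : ℝ) ^ (-(r' * s))) ≤
      μ {ω | threshold r (n k) ≤ H (n k) ω} := by
    filter_upwards
      [hn.eventually ((tendsto_log_clusterProd_threshold hγ hr).eventually_le_const hrr'),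
        hn.eventually (eventually_threshold_le_self r), hn.eventually (hL.eventually_gt_atTop 0),
        hn.eventually (eventually_ge_atTop 1), eventually_gt_atTop 0]
      with k hlog hthr hL0 hn1 hk0
    have hk : (0 : ℝ) < k := by exact_mod_cast hk0
    have hnk : (0 : ℝ) < n k := by exact_mod_cast hn1
    have hlog_n : log (n k) ≤ s * log k :=
      (log_le_log hnk (Nat.floor_le (by positivity))).trans_eq (log_rpow hk s)
    rw [hdist _ hn1 _ hthr]
    refine ENNReal.ofReal_le_ofReal (rpow_neg_le_inv_of_log_le_mul hk (clusterProd_pos hγ.le _) ?_)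
    calc log (clusterProd γ (threshold r (n k) - 1)) ≤ r' * log (n k) := (div_le_iff₀ hL0).1 hlog
      _ ≤ r' * (s * log k) := by gcongr; linarith
      _ = r' * s * log k := by ring
  have hdiv : ¬ Summable fun k : ℕ => (k : ℝ) ^ (-(r' * s)) := by
    rw [summable_nat_rpow]
    linarith
  filter_upwards [ae_frequently_mem_of_iIndepSet (fun k => hmeas _ measurableSet_Ici) hind
    (fun k => by positivity) hdiv hbound] with ω hω
  refine hn.frequently ((hω.and_eventually (hn.eventually (hL.eventually_gt_atTop 1))).mono ?_)
  exact fun k hk => (threshold_le_iff hk.2).1 hk.1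

end Steps

lemma limsup_eq_of_eventually_le_of_frequently_ge {α : Type*} {l : Filter α} {u : α → ℝ}
    {c : ℝ} {ε : ℕ → ℝ} (hε : Tendsto ε atTop (𝓝 0))
    (hle : ∀ j, ∀ᶠ x in l, u x ≤ c + ε j) (hge : ∀ j, ∃ᶠ x in l, c - ε j ≤ u x) :
    limsup u l = c := by
  have hbdd : IsBoundedUnder (· ≤ ·) l u := isBoundedUnder_of_eventually_le (hle 0)
  have hcobdd : IsCoboundedUnder (· ≤ ·) l u := IsCoboundedUnder.of_frequently_ge (hge 0)
  apply le_antisymm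
  · exact ge_of_tendsto' (by simpa using tendsto_const_nhds.add hε)
      fun j => limsup_le_of_le hcobdd (hle j)
  · exact le_of_tendsto' (by simpa using tendsto_const_nhds.sub hε)
      fun j => le_limsup_of_frequently_le (hge j) hbdd

end TailRedCluster

open TailRedCluster

theorem tail_red_cluster_limsup_general
    {Ω : Type*} [MeasureSpace Ω] [IsProbabilityMeasure (ℙ : Measure Ω)]
    (γ : ℝ) (hγ : 0 < γ)
    (H : ℕ → Ω → ℕ) (hmeas : ∀ n, Measurable (H n))
    (hdist : ∀ n, 1 ≤ n → ∀ m ≤ n,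
      ℙ {ω | m ≤ H n ω}
        = ENNReal.ofReal ((∏ k ∈ Finset.Icc 1 (m - 1), (1 + (k : ℝ) * γ))⁻¹))
    (hindep : ∀ r : ℝ, 0 < r → r < 1 → ∀ s : ℝ, 1 < s → s < 1 / r →
      ∃ N : ℕ, iIndepSet
        (fun n : {k : ℕ // N ≤ k} =>
          {ω | ⌈r * Real.log (⌊((n : ℕ) : ℝ) ^ s⌋₊ : ℝ)
                 / Real.log (Real.log (⌊((n : ℕ) : ℝ) ^ s⌋₊ : ℝ))⌉₊
               ≤ H ⌊((n : ℕ) : ℝ) ^ s⌋₊ ω}) ℙ) :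
    ∀ᵐ ω ∂ℙ, Filter.limsup
        (fun n : ℕ => (H n ω : ℝ) * Real.log (Real.log n) / Real.log n)
        atTop = 1 := by
  set ε : ℕ → ℝ := fun j => ((j : ℝ) + 2)⁻¹
  have hε : Tendsto ε atTop (𝓝 0) :=
    tendsto_inv_atTop_zero.comp (tendsto_natCast_atTop_atTop.atTop_add tendsto_const_nhds)
  have hε0 : ∀ j, 0 < ε j := fun j => by positivity
  have hε1 : ∀ j, ε j < 1 := fun j => inv_lt_one_of_one_lt₀ (by norm_cast; omega)
  have hupper : ∀ j, ∀ᵐ ω ∂ℙ, ∀ᶠ n in atTop,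
      (H n ω : ℝ) * log (log n) / log n ≤ 1 + ε j := fun j =>
    ae_eventually_le_of_one_lt hγ hdist (lt_add_of_pos_right 1 (hε0 j))
  have hlower : ∀ j, ∀ᵐ ω ∂ℙ, ∃ᶠ n in atTop,
      1 - ε j ≤ (H n ω : ℝ) * log (log n) / log n := fun j => by
    have hr : 0 < 1 - ε j := sub_pos.2 (hε1 j)
    obtain ⟨s, hs1, hsr⟩ := exists_between (one_lt_one_div hr (sub_lt_self 1 (hε0 j)))
    obtain ⟨N, hind⟩ := hindep _ hr (sub_lt_self 1 (hε0 j)) s hs1 hsr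
    exact ae_frequently_ge_of_iIndepSet hγ hmeas hdist hr (zero_lt_one.trans hs1)
      (by simpa using (lt_div_iff₀' hr).1 hsr) hind
  filter_upwards [ae_all_iff.2 hupper, ae_all_iff.2 hlower] with ω hle hge
  exact limsup_eq_of_eventually_le_of_frequently_ge hε hle hge

/-- Limsup behaviour of the tail red cluster sizes on the semi-line:
if `ℙ(Ĥ_n ≥ m) = ∏_{k=1}^{m-1}(1+kγ)⁻¹` for `m ≤ n`, `Ĥ_n ≤ n`, and the
events `{Ĥ_{⌊n^s⌋} ≥ ⌈r log⌊n^s⌋ / log log⌊n^s⌋⌉}` are eventually independent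
across `n`, then almost surely `limsup Ĥ_n log log n / log n = 1`. -/
theorem tail_red_cluster_limsup
    {Ω : Type*} [MeasureSpace Ω] [IsProbabilityMeasure (ℙ : Measure Ω)]
    (γ : ℝ) (hγ : 0 < γ)
    (H : ℕ → Ω → ℕ) (hmeas : ∀ n, Measurable (H n))
    (hbound : ∀ n ω, H n ω ≤ n)
    (hdist : ∀ n, 1 ≤ n → ∀ m ≤ n,
      ℙ {ω | m ≤ H n ω}
        = ENNReal.ofReal ((∏ k ∈ Finset.Icc 1 (m - 1), (1 + (k : ℝ) * γ))⁻¹))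
    (hindep : ∀ r : ℝ, 0 < r → r < 1 → ∀ s : ℝ, 1 < s → s < 1 / r →
      ∃ N : ℕ, iIndepSet
        (fun n : {k : ℕ // N ≤ k} =>
          {ω | ⌈r * Real.log (⌊((n : ℕ) : ℝ) ^ s⌋₊ : ℝ)
                 / Real.log (Real.log (⌊((n : ℕ) : ℝ) ^ s⌋₊ : ℝ))⌉₊
               ≤ H ⌊((n : ℕ) : ℝ) ^ s⌋₊ ω}) ℙ) :
    ∀ᵐ ω ∂ℙ, Filter.limsup
        (fun n : ℕ => (H n ω : ℝ) * Real.log (Real.log n) / Real.log n)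
        atTop = 1 :=
  tail_red_cluster_limsup_general γ hγ H hmeas hdist hindep
end

section
/- Fix $\gamma > 0$. For $n, \ell \geq 1$ let $N_\ell^n = \{\mathbf{x} \in (\mathbb{N}^*)^\ell : \sum_k \mathbf{x}_k \leq n\}$ and $S_\ell(n) = \sum_{\mathbf{x} \in N_\ell^n} \prod_{k=1}^\ell (1+k\gamma)^{-\mathbf{x}_k}$, and set $\nu_n = 1 + \sum_{\ell=1}^n (-1)^\ell S_\ell(n)$. Then $\nu_n \to e^{-1/\gamma}$ as $n \to \infty$. -/
/-!
Each constraint `∑ x_k ≤ n` only truncates a product of geometric series, so `S_ℓ(n)` increases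
to `∏_{k=1}^ℓ ∑_{x ≥ 1} (1 + kγ)^{-x} = ∏_{k=1}^ℓ 1/(kγ) = 1/(ℓ! γ^ℓ)`, while `S_ℓ(n) = 0` for
`ℓ > n`. Hence `ν_n = ∑_{ℓ ≥ 0} (-1)^ℓ S_ℓ(n)`, and the bound `0 ≤ S_ℓ(n) ≤ 1/(ℓ! γ^ℓ)`, summable
in `ℓ`, lets dominated convergence (Tannery's theorem) pass to the limit
`∑_ℓ (-1/γ)^ℓ / ℓ! = e^{-1/γ}`.
-/

open Filter Topology

lemma hasSum_inv_one_add_pow_pnat {c : ℝ} (hc : 0 < c) :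
    HasSum (fun n : ℕ+ => ((1 + c) ^ (n : ℕ))⁻¹) c⁻¹ := by
  have hr : (1 + c)⁻¹ < 1 := inv_lt_one_of_one_lt₀ (by linarith)
  have hgeom := (hasSum_geometric_of_lt_one (by positivity) hr).mul_left (1 + c)⁻¹
  rw [hasSum_pnat_iff_hasSum_succ (f := fun n : ℕ => ((1 + c) ^ n)⁻¹)]
  have hterm : (fun n : ℕ => ((1 + c) ^ (n + 1))⁻¹) = fun n => (1 + c)⁻¹ * (1 + c)⁻¹ ^ n := by
    ext n; rw [pow_succ', mul_inv, inv_pow]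
  have hsum : (1 + c)⁻¹ * (1 - (1 + c)⁻¹)⁻¹ = c⁻¹ := by
    have : c ≠ 0 := hc.ne'
    field_simp
    rw [add_sub_cancel_left, div_self this]
  rwa [hterm, ← hsum]

lemma hasSum_pi_prod_of_nonneg {β : Type*} {ℓ : ℕ} {f : Fin ℓ → β → ℝ} {a : Fin ℓ → ℝ}
    (hf : ∀ k, HasSum (f k) (a k)) (hf_nonneg : ∀ k b, 0 ≤ f k b) :
    HasSum (fun x : Fin ℓ → β => ∏ k, f k (x k)) (∏ k, a k) := by
  induction ℓ with
  | zero => simp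
  | succ ℓ ih =>
    have htail := ih (fun k => hf k.succ) (fun k => hf_nonneg k.succ)
    have hsummable := (hf 0).summable.mul_of_nonneg htail.summable (hf_nonneg 0)
      fun x => Finset.prod_nonneg fun k _ => hf_nonneg k.succ (x k)
    rw [← (Fin.consEquiv fun _ => β).hasSum_iff, Fin.prod_univ_succ]
    simpa [Function.comp_def, Fin.consEquiv, Fin.prod_univ_succ] using (hf 0).mul htail hsummable

lemma tendsto_tsum_ite_le {β : Type*} (N : β → ℕ) {f : β → ℝ} (hf : Summable f) :
    Tendsto (fun n => ∑' x, if N x ≤ n then f x else 0) atTop (𝓝 (∑' x, f x)) := by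
  refine tendsto_tsum_of_dominated_convergence hf.norm (fun x => ?_) (.of_forall fun n x => ?_)
  · exact tendsto_const_nhds.congr' <| (eventually_ge_atTop (N x)).mono fun n hn => (if_pos hn).symm
  · split_ifs <;> simp

lemma Fin.prod_inv_succ_mul (γ : ℝ) (ℓ : ℕ) :
    ∏ k : Fin ℓ, (((k : ℕ) + 1 : ℝ) * γ)⁻¹ = ((ℓ.factorial : ℝ) * γ ^ ℓ)⁻¹ := by
  rw [Finset.prod_inv_distrib, Finset.prod_mul_distrib, Finset.prod_const, Finset.card_univ,
    Fintype.card_fin, Fin.prod_univ_eq_prod_range (fun k => (k : ℝ) + 1),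
    ← Finset.prod_range_add_one_eq_factorial]
  norm_cast

lemma hasSum_exp_neg_inv (γ : ℝ) :
    HasSum (fun ℓ : ℕ => (-1 : ℝ) ^ ℓ * ((ℓ.factorial : ℝ) * γ ^ ℓ)⁻¹) (Real.exp (-1 / γ)) := by
  have hterm : (fun ℓ : ℕ => (-1 : ℝ) ^ ℓ * ((ℓ.factorial : ℝ) * γ ^ ℓ)⁻¹) =
      fun ℓ => (-1 / γ) ^ ℓ / ℓ.factorial := by
    ext ℓ
    rw [div_pow, div_div, mul_comm (γ ^ ℓ), div_eq_mul_inv]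
  rw [hterm, Real.exp_eq_exp_ℝ]
  exact NormedSpace.expSeries_div_hasSum_exp (-1 / γ)

namespace RecoveryFPP

variable (γ : ℝ)

noncomputable def weight (ℓ : ℕ) (x : Fin ℓ → ℕ+) : ℝ :=
  ∏ k : Fin ℓ, ((1 + ((k : ℕ) + 1 : ℝ) * γ) ^ ((x k : ℕ)))⁻¹

/-- `S_ℓ(n)`; unlike in the paper, `ℓ = 0` is allowed, with `S_0(n) = 1`. -/
noncomputable def truncatedSum (ℓ n : ℕ) : ℝ :=
  ∑' x : Fin ℓ → ℕ+, if (∑ i : Fin ℓ, (x i : ℕ)) ≤ n then weight γ ℓ x else 0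

variable {γ}

lemma weight_nonneg (hγ : 0 < γ) (ℓ : ℕ) (x : Fin ℓ → ℕ+) : 0 ≤ weight γ ℓ x :=
  Finset.prod_nonneg fun _ _ => by positivity

lemma hasSum_weight (hγ : 0 < γ) (ℓ : ℕ) :
    HasSum (weight γ ℓ) ((ℓ.factorial : ℝ) * γ ^ ℓ)⁻¹ := by
  rw [← Fin.prod_inv_succ_mul]
  exact hasSum_pi_prod_of_nonneg
    (f := fun k (n : ℕ+) => ((1 + ((k : ℕ) + 1 : ℝ) * γ) ^ (n : ℕ))⁻¹)
    (fun _ => hasSum_inv_one_add_pow_pnat (by positivity)) fun _ _ => by positivity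

lemma truncatedSum_nonneg (hγ : 0 < γ) (ℓ n : ℕ) : 0 ≤ truncatedSum γ ℓ n :=
  tsum_nonneg fun _ => by split_ifs <;> simp [weight_nonneg hγ]

lemma truncatedSum_le (hγ : 0 < γ) (ℓ n : ℕ) :
    truncatedSum γ ℓ n ≤ ((ℓ.factorial : ℝ) * γ ^ ℓ)⁻¹ := by
  have hle : ∀ x, (if (∑ i, (x i : ℕ)) ≤ n then weight γ ℓ x else 0) ≤ weight γ ℓ x :=
    fun x => by split_ifs <;> simp [weight_nonneg hγ]
  have hnonneg : ∀ x, 0 ≤ if (∑ i, (x i : ℕ)) ≤ n then weight γ ℓ x else 0 :=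
    fun x => by split_ifs <;> simp [weight_nonneg hγ]
  have hsummable := (hasSum_weight hγ ℓ).summable.of_nonneg_of_le hnonneg hle
  exact hasSum_le hle hsummable.hasSum (hasSum_weight hγ ℓ)

lemma tendsto_truncatedSum (hγ : 0 < γ) (ℓ : ℕ) :
    Tendsto (truncatedSum γ ℓ) atTop (𝓝 ((ℓ.factorial : ℝ) * γ ^ ℓ)⁻¹) := by
  rw [← (hasSum_weight hγ ℓ).tsum_eq]
  exact tendsto_tsum_ite_le _ (hasSum_weight hγ ℓ).summable

lemma truncatedSum_zero_left (n : ℕ) : truncatedSum γ 0 n = 1 := by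
  simp [truncatedSum, weight]

lemma truncatedSum_eq_zero_of_lt {ℓ n : ℕ} (h : n < ℓ) : truncatedSum γ ℓ n = 0 := by
  refine (tsum_congr fun x => if_neg ?_).trans tsum_zero
  have : ℓ ≤ ∑ i, (x i : ℕ) := by
    simpa using Finset.card_nsmul_le_sum Finset.univ (fun i => (x i : ℕ)) 1 fun i _ => (x i).pos
  omega

lemma one_add_sum_Icc_eq_tsum (n : ℕ) :
    1 + ∑ ℓ ∈ Finset.Icc 1 n, (-1 : ℝ) ^ ℓ * truncatedSum γ ℓ n =
      ∑' ℓ, (-1 : ℝ) ^ ℓ * truncatedSum γ ℓ n := by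
  rw [tsum_eq_sum (s := Finset.range (n + 1)) fun ℓ hℓ => by
      rw [truncatedSum_eq_zero_of_lt (by simpa using hℓ), mul_zero],
    Finset.range_eq_Ico, Finset.sum_eq_sum_Ico_succ_bot n.succ_pos, Nat.succ_eq_add_one, zero_add,
    Finset.Ico_add_one_right_eq_Icc, truncatedSum_zero_left, pow_zero, mul_one]

lemma tendsto_tsum_neg_one_pow_mul_truncatedSum (hγ : 0 < γ) :
    Tendsto (fun n => ∑' ℓ, (-1 : ℝ) ^ ℓ * truncatedSum γ ℓ n) atTop (𝓝 (Real.exp (-1 / γ))) := by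
  rw [← (hasSum_exp_neg_inv γ).tsum_eq]
  refine tendsto_tsum_of_dominated_convergence (bound := fun ℓ => ((ℓ.factorial : ℝ) * γ ^ ℓ)⁻¹)
    ?_ (fun ℓ => (tendsto_truncatedSum hγ ℓ).const_mul _) (.of_forall fun n ℓ => ?_)
  · exact (hasSum_exp_neg_inv γ).summable.abs.congr fun ℓ => by
      rw [abs_mul, abs_pow, abs_neg, abs_one, one_pow, one_mul, abs_of_pos (by positivity)]
  · rw [norm_mul, norm_pow, norm_neg, norm_one, one_pow, one_mul,
      Real.norm_of_nonneg (truncatedSum_nonneg hγ ℓ n)]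
    exact truncatedSum_le hγ ℓ n

end RecoveryFPP

/-- The complete recovery probabilities
`ν_n = 1 + ∑_{ℓ=1}^n (-1)^ℓ S_ℓ(n)`, where
`S_ℓ(n) = ∑_{x ∈ (ℕ*)^ℓ, ∑ x_k ≤ n} ∏_{k=1}^ℓ (1+kγ)^{-x_k}`,
converge to `e^{-1/γ}` as `n → ∞`. -/
theorem nu_n_tendsto (γ : ℝ) (hγ : 0 < γ) :
    Tendsto (fun n : ℕ =>
        1 + ∑ ℓ ∈ Finset.Icc 1 n, (-1 : ℝ) ^ ℓ *
          (∑' x : Fin ℓ → ℕ+,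
            if (∑ i : Fin ℓ, (x i : ℕ)) ≤ n then
              ∏ k : Fin ℓ, ((1 + ((k : ℕ) + 1 : ℝ) * γ) ^ ((x k : ℕ)))⁻¹
            else 0))
      atTop (nhds (Real.exp (-1 / γ))) :=
  (RecoveryFPP.tendsto_tsum_neg_one_pow_mul_truncatedSum hγ).congr fun n =>
    (RecoveryFPP.one_add_sum_Icc_eq_tsum n).symm
end

section
/- Let $\gamma > 0$ and suppose $(H_t)_{t\geq 0}$ are nonnegative integer random variables such that for each $n$, with $\tau_n = \sum_{k=2}^n T_k$ for i.i.d. Exp(1) passage times $T_k$, the event $\{R_{\tau_n} = \{n\}\}$ (only vertex $n$ is red at time $\tau_n$) occurs for infinitely many $n$ almost surely, and suppose almost surely no reaching time $\tau_v$ coincides with any recovery completion time $\tau_w + \mathbf{C}_w$. Then almost surely $\liminf_{t\to\infty} H_t = 0$, where $H_t$ is the size of the longest red path at time $t$. -/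
open MeasureTheory ProbabilityTheory Filter

/-! Passage times are almost surely nonnegative, so reaching times increase in `n`. Take a
reaching time `τ n` at which `n` is the only red vertex. Every earlier vertex has then recovered,
strictly before `τ n` because no reaching time is a recovery time, while later vertices are not yet
reached; so no vertex is red on a short interval ending at `τ n`. If such `τ n` exceed every bound
this gives arbitrarily late times with `H = 0`; otherwise every vertex recovers before some
fixed time, after which nothing is red. -/

lemma ae_nonneg_gammaMeasure (a r : ℝ) : ∀ᵐ x ∂gammaMeasure a r, 0 ≤ x := by
  have hIio : {x : ℝ | ¬0 ≤ x} = Set.Iio 0 := by ext; simp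
  rw [ae_iff, hIio, gammaMeasure, withDensity_apply _ measurableSet_Iio]
  exact lintegral_gammaPDF_of_nonpos le_rfl

lemma monotone_sum_Icc_of_nonneg {T : ℕ → ℝ} (hT : ∀ k, 0 ≤ T k) (a : ℕ) :
    Monotone fun n => ∑ k ∈ Finset.Icc a n, T k :=
  fun _ _ hmn => Finset.sum_le_sum_of_subset_of_nonneg (Finset.Icc_subset_Icc_right hmn)
    fun k _ _ => hT k

namespace RedPath

variable (τ C : ℕ → ℝ)

/-- Vertex `v` is reached at time `τ v` and stays red for the recovery duration `C v`. -/
def IsRed (t : ℝ) (v : ℕ) : Prop := τ v ≤ t ∧ t < τ v + C v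

def OnlyRedAt (n : ℕ) : Prop := ∀ v, 1 ≤ v → (IsRed τ C (τ n) v ↔ v = n)

noncomputable def longestRedPath (t : ℝ) : ℕ :=
  sSup {m : ℕ | ∃ a, 1 ≤ a ∧ ∀ v ∈ Finset.Icc a (a + m - 1), IsRed τ C t v}

variable {τ C}

lemma longestRedPath_eq_zero {t : ℝ} (h : ∀ v, 1 ≤ v → ¬IsRed τ C t v) :
    longestRedPath τ C t = 0 := by
  refine Nat.le_zero.mp (csSup_le ⟨0, 1, le_rfl, by simp⟩ ?_)
  rintro m ⟨a, ha, hred⟩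
  by_contra! hm
  exact h a ha (hred a (Finset.mem_Icc.mpr ⟨le_rfl, by omega⟩))

lemma recovery_lt_of_onlyRedAt (hτ : Monotone τ)
    (hnc : ∀ v, 1 ≤ v → ∀ w, 1 ≤ w → τ v ≠ τ w + C w)
    {n v : ℕ} (hn : OnlyRedAt τ C n) (hv : 1 ≤ v) (hvn : v < n) :
    τ v + C v < τ n := by
  have hnot_red : ¬IsRed τ C (τ n) v := fun h => hvn.ne ((hn v hv).mp h)
  have hle : τ v + C v ≤ τ n := not_lt.mp fun h => hnot_red ⟨hτ hvn.le, h⟩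
  exact hle.lt_of_ne (hnc n (hv.trans hvn.le) v hv).symm

lemma exists_no_red_ge (hτ : Monotone τ)
    (hnc : ∀ v, 1 ≤ v → ∀ w, 1 ≤ w → τ v ≠ τ w + C w)
    (hio : ∃ᶠ n in atTop, OnlyRedAt τ C n) (B : ℝ) :
    ∃ t ≥ B, ∀ v, 1 ≤ v → ¬IsRed τ C t v := by
  by_cases hlate : ∃ n, 1 ≤ n ∧ OnlyRedAt τ C n ∧ B < τ n
  · obtain ⟨n, hn1, hn, hBn⟩ := hlate
    set s := (Finset.Ico 1 n).fold max B fun v => τ v + C v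
    have hs : s < τ n := (Finset.fold_max_lt _).mpr ⟨hBn, fun v hv =>
      recovery_lt_of_onlyRedAt hτ hnc hn (Finset.mem_Ico.mp hv).1 (Finset.mem_Ico.mp hv).2⟩
    refine ⟨s, (Finset.le_fold_max _).mpr (Or.inl le_rfl), fun v hv ⟨hreached, hnot_rec⟩ => ?_⟩
    rcases lt_or_ge v n with hvn | hnv
    · have hrec : τ v + C v ≤ s :=
        (Finset.le_fold_max _).mpr (Or.inr ⟨v, Finset.mem_Ico.mpr ⟨hv, hvn⟩, le_rfl⟩)
      linarith
    · linarith [hτ hnv]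
  · push Not at hlate
    refine ⟨B, le_rfl, fun v hv ⟨_, hnot_rec⟩ => ?_⟩
    obtain ⟨n, hvn, hn⟩ := (frequently_atTop.mp hio) (v + 1)
    have hrec := recovery_lt_of_onlyRedAt hτ hnc hn hv hvn
    linarith [hlate n (by omega) hn]

lemma liminf_longestRedPath_eq_zero (hτ : Monotone τ)
    (hnc : ∀ v, 1 ≤ v → ∀ w, 1 ≤ w → τ v ≠ τ w + C w)
    (hio : ∃ᶠ n in atTop, OnlyRedAt τ C n) :
    liminf (fun t => longestRedPath τ C t) atTop = 0 := by
  have hzero : ∃ᶠ t in atTop, longestRedPath τ C t ≤ 0 := frequently_atTop.mpr fun B =>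
    let ⟨t, htB, ht⟩ := exists_no_red_ge hτ hnc hio B
    ⟨t, htB, (longestRedPath_eq_zero ht).le⟩
  exact Nat.le_zero.mp (liminf_le_of_frequently_le hzero)

end RedPath

open RedPath in
theorem liminf_longest_red_path_zero_general
    {Ω : Type*} [MeasureSpace Ω]
    (T : ℕ → Ω → ℝ) (C : ℕ → Ω → ℝ)
    (hTmeas : ∀ k, Measurable (T k))
    (hTdist : ∀ k, Measure.map (T k) ℙ = expMeasure 1)
    (τ : ℕ → Ω → ℝ) (hτ : ∀ n ω, τ n ω = ∑ k ∈ Finset.Icc 2 n, T k ω)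
    (H : ℝ → Ω → ℕ)
    (hH : ∀ t ω, H t ω = sSup {m : ℕ | ∃ a : ℕ, 1 ≤ a ∧
      ∀ v ∈ Finset.Icc a (a + m - 1), τ v ω ≤ t ∧ t < τ v ω + C v ω})
    (hio : ∀ᵐ ω ∂ℙ, ∃ᶠ n : ℕ in atTop, ∀ v : ℕ, 1 ≤ v →
      ((τ v ω ≤ τ n ω ∧ τ n ω < τ v ω + C v ω) ↔ v = n))
    (hnc : ∀ᵐ ω ∂ℙ, ∀ v : ℕ, 1 ≤ v → ∀ w : ℕ, 1 ≤ w →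
      τ v ω ≠ τ w ω + C w ω) :
    ∀ᵐ ω ∂ℙ, Filter.liminf (fun t : ℝ => H t ω) atTop = 0 := by
  have hT_nonneg : ∀ᵐ ω ∂ℙ, ∀ k, 0 ≤ T k ω := ae_all_iff.mpr fun k =>
    ae_of_ae_map (hTmeas k).aemeasurable (hTdist k ▸ ae_nonneg_gammaMeasure 1 1)
  filter_upwards [hio, hnc, hT_nonneg] with ω hioω hncω hTω
  have hmono : Monotone fun n => τ n ω := by
    simpa only [hτ] using monotone_sum_Icc_of_nonneg hTω 2
  have hH_eq : (fun t => H t ω) = longestRedPath (τ · ω) (C · ω) := funext fun t => hH t ω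
  rw [hH_eq]
  exact liminf_longestRedPath_eq_zero hmono hncω hioω

/-- FPP with recovery on the semi-line: if almost surely, at infinitely many
reaching times `τ n` the only red vertex is `n` itself, and no reaching time
coincides with a recovery completion time, then the length `H t` of the
longest red path satisfies `liminf_{t→∞} H t = 0` almost surely.
Here vertex `v ≥ 1` is red at time `t` iff `τ v ≤ t < τ v + C v`, and
`H t` is the largest `m` such that `m` consecutive vertices are all red. -/
theorem liminf_longest_red_path_zero
    {Ω : Type*} [MeasureSpace Ω] [IsProbabilityMeasure (ℙ : Measure Ω)]
    (T : ℕ → Ω → ℝ) (C : ℕ → Ω → ℝ)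
    (hTmeas : ∀ k, Measurable (T k)) (hCmeas : ∀ j, Measurable (C j))
    (hindep : iIndepFun
      (Sum.elim T C : ℕ ⊕ ℕ → Ω → ℝ) ℙ)
    (hTdist : ∀ k, Measure.map (T k) ℙ = expMeasure 1)
    (γ : ℝ) (hγ : 0 < γ)
    (hCdist : ∀ j, Measure.map (C j) ℙ = expMeasure γ)
    (τ : ℕ → Ω → ℝ) (hτ : ∀ n ω, τ n ω = ∑ k ∈ Finset.Icc 2 n, T k ω)
    (H : ℝ → Ω → ℕ)
    (hH : ∀ t ω, H t ω = sSup {m : ℕ | ∃ a : ℕ, 1 ≤ a ∧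
      ∀ v ∈ Finset.Icc a (a + m - 1), τ v ω ≤ t ∧ t < τ v ω + C v ω})
    (hio : ∀ᵐ ω ∂ℙ, ∃ᶠ n : ℕ in atTop, ∀ v : ℕ, 1 ≤ v →
      ((τ v ω ≤ τ n ω ∧ τ n ω < τ v ω + C v ω) ↔ v = n))
    (hnc : ∀ᵐ ω ∂ℙ, ∀ v : ℕ, 1 ≤ v → ∀ w : ℕ, 1 ≤ w →
      τ v ω ≠ τ w ω + C w ω) :
    ∀ᵐ ω ∂ℙ, Filter.liminf (fun t : ℝ => H t ω) atTop = 0 :=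
  liminf_longest_red_path_zero_general T C hTmeas hTdist τ hτ H hH hio hnc
end
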